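/- Let μ be a probability measure on a measurable space X, let U ⊆ X be a measurable set with μ(U) ≥ 1/2, and let μ̄ be the normalized restriction of μ to U, μ̄(A) = μ(A ∩ U)/μ(U). Let g : X → ℝ be a bounded measurable function vanishing outside U, let Γ : X → [0,∞) be measurable, and suppose there is λ > 0 with λ·Var(g; μ̄) ≤ ∫ Γ dμ̄. Then Var(g; μ) ≤ (1/λ)·∫ Γ dμ + 2·(1 − μ(U))·‖g‖_∞². -/

import Mathlib

open MeasureTheory ENNReal

/-- The variance of a real-valued function `G` with respect to a measure `ν`:
`Var(G; ν) = ∫ G² dν − (∫ G dν)²`. -/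
noncomputable def var {X : Type*} [MeasurableSpace X] (ν : Measure X) (G : X → ℝ) : ℝ :=
  (∫ x, (G x) ^ 2 ∂ν) - (∫ x, G x ∂ν) ^ 2

/-!
The normalized restriction `μ̄` of `μ` to `U` satisfies `∫ h dμ̄ = μ(U)⁻¹ ∫ h dμ` for every `h`
vanishing off `U`, which gives the exact decomposition
`Var(g; μ) = μ(U) · Var(g; μ̄) + (1 - μ(U)) / μ(U) · (∫ g dμ)²`.
The spectral gap bounds the first term by `λ⁻¹ ∫_U Γ dμ`, and `μ(U) ≥ 1/2` together with
`|∫ g dμ| ≤ ‖g‖_∞` bounds the second by `2 (1 - μ(U)) ‖g‖_∞²`.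
-/

section

variable {X : Type*} [MeasurableSpace X] {μ : Measure X} {U : Set X}

lemma integral_inv_smul_restrict (f : X → ℝ) :
    ∫ x, f x ∂((μ U)⁻¹ • μ.restrict U) = ((μ U).toReal)⁻¹ * ∫ x in U, f x ∂μ := by
  rw [integral_smul_measure, ENNReal.toReal_inv, smul_eq_mul]

lemma var_eq_mul_var_inv_smul_restrict_add (hμU : μ U ≠ 0) (hμU_fin : μ U ≠ ∞) {g : X → ℝ}
    (hsupp : ∀ x, x ∉ U → g x = 0) :
    var μ g = (μ U).toReal * var ((μ U)⁻¹ • μ.restrict U) g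
      + (1 - (μ U).toReal) / (μ U).toReal * (∫ x, g x ∂μ) ^ 2 := by
  have hm : (μ U).toReal ≠ 0 := (ENNReal.toReal_pos hμU hμU_fin).ne'
  have hsupp_sq : ∀ x, x ∉ U → g x ^ 2 = 0 := fun x hx => by simp [hsupp x hx]
  simp only [var, integral_inv_smul_restrict, setIntegral_eq_integral_of_forall_compl_eq_zero hsupp,
    setIntegral_eq_integral_of_forall_compl_eq_zero hsupp_sq]
  field_simp
  ring

lemma norm_integral_le_toReal_eLpNormEssSup {E : Type*} [NormedAddCommGroup E] [NormedSpace ℝ E]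
    [IsProbabilityMeasure μ] {f : X → E} (hf : eLpNormEssSup f μ ≠ ∞) :
    ‖∫ x, f x ∂μ‖ ≤ (eLpNormEssSup f μ).toReal := by
  have hbound : ∀ᵐ x ∂μ, ‖f x‖ ≤ (eLpNormEssSup f μ).toReal := by
    filter_upwards [ae_le_eLpNormEssSup (f := f) (μ := μ)] with x hx
    simpa using ENNReal.toReal_mono hf hx
  simpa using norm_integral_le_of_norm_le_const hbound

lemma mul_var_inv_smul_restrict_le_of_gap (hμU : μ U ≠ 0) (hμU_fin : μ U ≠ ∞) {g f : X → ℝ}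
    {lam : ℝ} (hlam : 0 < lam)
    (hgap : lam * var ((μ U)⁻¹ • μ.restrict U) g ≤ ∫ x, f x ∂((μ U)⁻¹ • μ.restrict U)) :
    (μ U).toReal * var ((μ U)⁻¹ • μ.restrict U) g ≤ 1 / lam * ∫ x in U, f x ∂μ := by
  have hm : (μ U).toReal ≠ 0 := (ENNReal.toReal_pos hμU hμU_fin).ne'
  rw [integral_inv_smul_restrict] at hgap
  rw [div_mul_eq_mul_div, le_div_iff₀ hlam, one_mul]
  calc (μ U).toReal * var ((μ U)⁻¹ • μ.restrict U) g * lam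
      = (μ U).toReal * (lam * var ((μ U)⁻¹ • μ.restrict U) g) := by ring
    _ ≤ (μ U).toReal * ((μ U).toReal⁻¹ * ∫ x in U, f x ∂μ) := by gcongr
    _ = ∫ x in U, f x ∂μ := by field_simp

end

theorem variance_from_local_gap_general {X : Type*} [MeasurableSpace X] (μ : Measure X)
    [IsProbabilityMeasure μ] (U : Set X)
    (hUhalf : (1 : ℝ≥0∞) / 2 ≤ μ U)
    (g : X → ℝ) (hgbdd : ∃ C : ℝ, ∀ x, |g x| ≤ C)
    (hsupp : ∀ x, x ∉ U → g x = 0)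
    (Γ : X → ℝ) (hΓ0 : ∀ x, 0 ≤ Γ x) (hΓint : Integrable Γ μ)
    (lam : ℝ) (hlam : 0 < lam)
    (hgap : lam * var ((μ U)⁻¹ • μ.restrict U) g
      ≤ ∫ x, Γ x ∂((μ U)⁻¹ • μ.restrict U)) :
    var μ g ≤ (1 / lam) * (∫ x, Γ x ∂μ)
      + 2 * (1 - (μ U).toReal) * (eLpNormEssSup g μ).toReal ^ 2 := by
  obtain ⟨C, hC⟩ := hgbdd
  have hμU : μ U ≠ 0 := fun h => by simp [h] at hUhalf
  set m := (μ U).toReal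
  have hm_half : 1 / 2 ≤ m := by simpa using ENNReal.toReal_mono (measure_ne_top μ U) hUhalf
  have hm_le_one : m ≤ 1 := measureReal_le_one
  set K := (eLpNormEssSup g μ).toReal
  have hK : eLpNormEssSup g μ ≠ ∞ := (eLpNormEssSup_lt_top_of_ae_bound (C := C) (ae_of_all _ hC)).ne
  have hmean : (∫ x, g x ∂μ) ^ 2 ≤ K ^ 2 := by
    simpa only [Real.norm_eq_abs, sq_abs] using
      pow_le_pow_left₀ (abs_nonneg _) (norm_integral_le_toReal_eLpNormEssSup hK) 2
  have hΓ_restrict : 1 / lam * ∫ x in U, Γ x ∂μ ≤ 1 / lam * ∫ x, Γ x ∂μ :=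
    mul_le_mul_of_nonneg_left (setIntegral_le_integral hΓint (ae_of_all _ hΓ0)) (by positivity)
  have hdefect : (1 - m) / m * (∫ x, g x ∂μ) ^ 2 ≤ 2 * (1 - m) * K ^ 2 := by
    have : (1 - m) / m ≤ 2 * (1 - m) := by
      rw [div_le_iff₀ (by linarith)]; nlinarith
    exact mul_le_mul this hmean (sq_nonneg _) (by linarith)
  rw [var_eq_mul_var_inv_smul_restrict_add hμU (measure_ne_top μ U) hsupp]
  linarith [mul_var_inv_smul_restrict_le_of_gap hμU (measure_ne_top μ U) hlam hgap]

/-- A spectral-gap bound `λ·Var(g; μ̄) ≤ ∫ Γ dμ̄` for the normalized restriction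
`μ̄ = μ(·∩U)/μ(U)` of `μ` to a set `U` with `μ(U) ≥ 1/2`, applied to a bounded
measurable `g` vanishing outside `U`, yields the defective variance bound
`Var(g; μ) ≤ (1/λ)·∫ Γ dμ + 2·(1 − μ(U))·‖g‖_∞²`. -/
theorem variance_from_local_gap {X : Type*} [MeasurableSpace X] (μ : Measure X)
    [IsProbabilityMeasure μ] (U : Set X) (hU : MeasurableSet U)
    (hUhalf : (1 : ℝ≥0∞) / 2 ≤ μ U)
    (g : X → ℝ) (hg : Measurable g) (hgbdd : ∃ C : ℝ, ∀ x, |g x| ≤ C)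
    (hsupp : ∀ x, x ∉ U → g x = 0)
    (Γ : X → ℝ) (hΓ : Measurable Γ) (hΓ0 : ∀ x, 0 ≤ Γ x) (hΓint : Integrable Γ μ)
    (lam : ℝ) (hlam : 0 < lam)
    (hgap : lam * var ((μ U)⁻¹ • μ.restrict U) g
      ≤ ∫ x, Γ x ∂((μ U)⁻¹ • μ.restrict U)) :
    var μ g ≤ (1 / lam) * (∫ x, Γ x ∂μ)
      + 2 * (1 - (μ U).toReal) * (eLpNormEssSup g μ).toReal ^ 2 :=
  variance_from_local_gap_general μ U hUhalf g hgbdd hsupp Γ hΓ0 hΓint lam hlam hgap
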